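/- arXiv:1812.06810 — 3 statements merged into one kernel-verified Lean document; each statement's English description precedes it below -/
import Mathlib

section
/- Let X be a real normed vector space, L : X → ℝ a three-times continuously (Fréchet) differentiable functional, and let x_c, x_d ∈ X with e := x_c − x_d. Then L(x_c) − L(x_d) = (1/2)·(L'(x_c)(e) + L'(x_d)(e)) + R, where R = (1/2)·∫₀¹ L'''(x_d + s·e)(e,e,e)·s·(s−1) ds. (Trapezoidal-rule error identity along the segment from x_d to x_c.) -/
open MeasureTheory

/-- Trapezoidal-rule error identity along the segment from `x_d` to `x_c` for a
`C³` functional `L` on a real normed space. -/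
theorem dwr_trapezoid_identity {X : Type*} [NormedAddCommGroup X] [NormedSpace ℝ X]
    (L : X → ℝ) (hL : ContDiff ℝ 3 L) (xc xd : X) :
    L xc - L xd
      = (1 / 2) * (fderiv ℝ L xc (xc - xd) + fderiv ℝ L xd (xc - xd))
        + (1 / 2) * ∫ s in (0:ℝ)..1,
            (iteratedFDeriv ℝ 3 L (xd + s • (xc - xd)) ![xc - xd, xc - xd, xc - xd])
              * s * (s - 1) := by
  set e := xc - xd with he
  set γ : ℝ → X := fun s => xd + s • e with hγdef
  have hγ : ∀ s : ℝ, HasDerivAt γ e s := fun s => by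
    have h := ((hasDerivAt_id s).smul_const e).const_add xd
    rw [one_smul] at h
    exact h
  have hγc : Continuous γ := continuous_const.add (continuous_id.smul continuous_const)
  have hL1 : ContDiff ℝ 2 (fderiv ℝ L) := hL.fderiv_right (by norm_num)
  have hL2 : ContDiff ℝ 1 (fderiv ℝ (fderiv ℝ L)) := hL1.fderiv_right (by norm_num)
  set g : ℝ → ℝ := fun s => L (γ s) with hgdef
  set g1 : ℝ → ℝ := fun s => fderiv ℝ L (γ s) e with hg1def
  set g2 : ℝ → ℝ := fun s => fderiv ℝ (fderiv ℝ L) (γ s) e e with hg2def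
  set g3 : ℝ → ℝ := fun s => fderiv ℝ (fderiv ℝ (fderiv ℝ L)) (γ s) e e e with hg3def
  have hg : ∀ s, HasDerivAt g (g1 s) s := fun s =>
    ((hL.differentiable (by norm_num) (γ s)).hasFDerivAt).comp_hasDerivAt s (hγ s)
  have hg1 : ∀ s, HasDerivAt g1 (g2 s) s := fun s => by
    have h := ((hL1.differentiable (by norm_num) (γ s)).hasFDerivAt).comp_hasDerivAt s (hγ s)
    simpa [Function.comp] using h.clm_apply (hasDerivAt_const s e)
  have hg2 : ∀ s, HasDerivAt g2 (g3 s) s := fun s => by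
    have h := ((hL2.differentiable (by norm_num) (γ s)).hasFDerivAt).comp_hasDerivAt s (hγ s)
    simpa [Function.comp] using
      (h.clm_apply (hasDerivAt_const s e)).clm_apply (hasDerivAt_const s e)
  have hg3c : Continuous g3 := by
    have h := (hL2.continuous_fderiv (by norm_num)).comp hγc
    exact ((h.clm_apply continuous_const).clm_apply continuous_const).clm_apply continuous_const
  -- rewrite iterated derivative
  have hiter : ∀ s : ℝ, iteratedFDeriv ℝ 3 L (γ s) ![e, e, e] = g3 s := by
    intro s
    show iteratedFDeriv ℝ (2+1) L (γ s) ![e, e, e] = g3 s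
    rw [iteratedFDeriv_succ_apply_right, iteratedFDeriv_two_apply]
    simp [Fin.init, Fin.last]
    rfl
  -- antiderivative
  set φ : ℝ → ℝ := fun s => g2 s * (s * (s - 1) / 2) - g1 s * (s - 1/2) + g s with hφdef
  have hφ : ∀ s, HasDerivAt φ (g3 s * (s * (s - 1) / 2)) s := by
    intro s
    have hp : HasDerivAt (fun s : ℝ => s * (s - 1) / 2) (s - 1/2) s := by
      have := ((hasDerivAt_id s).mul ((hasDerivAt_id s).sub_const 1)).div_const 2
      refine this.congr_deriv ?_; simp only [id]; ring
    have hq : HasDerivAt (fun s : ℝ => s - 1/2) 1 s := (hasDerivAt_id s).sub_const _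
    have := (((hg2 s).mul hp).sub ((hg1 s).mul hq)).add (hg s)
    refine this.congr_deriv ?_; ring
  have hint : Continuous fun s => g3 s * (s * (s - 1) / 2) := by fun_prop
  have hFTC : (∫ s in (0:ℝ)..1, g3 s * (s * (s - 1) / 2)) = φ 1 - φ 0 :=
    intervalIntegral.integral_eq_sub_of_hasDerivAt (fun s _ => hφ s)
      (hint.intervalIntegrable 0 1)
  have hγ1 : γ 1 = xc := by simp [hγdef, he]
  have hγ0 : γ 0 = xd := by simp [hγdef]
  have hI : (∫ s in (0:ℝ)..1, g3 s * s * (s - 1))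
      = 2 * ∫ s in (0:ℝ)..1, g3 s * (s * (s - 1) / 2) := by
    rw [← intervalIntegral.integral_const_mul]
    congr 1; funext s; ring
  have hL' : L xc = g 1 := by rw [hgdef]; simp [hγ1]
  have hL0 : L xd = g 0 := by rw [hgdef]; simp [hγ0]
  have h1 : fderiv ℝ L xc e = g1 1 := by rw [hg1def]; simp [hγ1]
  have h0 : fderiv ℝ L xd e = g1 0 := by rw [hg1def]; simp [hγ0]
  calc L xc - L xd = g 1 - g 0 := by rw [hL', hL0]
    _ = (1/2) * (g1 1 + g1 0) + (1/2) * ∫ s in (0:ℝ)..1, g3 s * s * (s - 1) := by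
        rw [hI, hFTC, hφdef]
        simp only
        ring
    _ = _ := by
        rw [h1, h0]
        congr 1
        congr 1
        apply intervalIntegral.integral_congr
        intro s _
        simp only
        rw [← hiter s]
end

section
/- Let X be a real normed vector space and L : X → ℝ a C³ functional. Suppose x_c ∈ X satisfies L'(x_c) = 0 (x_c is a stationary point), and x_d ∈ X satisfies L'(x_d)(y_d) = S̃(y_d) for some fixed continuous linear functional S̃ : X → ℝ and for all y_d in a subspace X_d ⊆ X containing x_d. If additionally L'(x_c)(x_d) = 0 holds (e.g. vacuously since L'(x_c) = 0), then for every y_d ∈ X_d: L(x_c) − L(x_d) = (1/2)·L'(x_d)(x_c − y_d) + (1/2)·S̃(y_d − x_d) + R, where R = (1/2)·∫₀¹ L'''(x_d + s·e)(e,e,e)·s·(s−1) ds and e = x_c − x_d. -/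
open MeasureTheory

/-- Trapezoidal rule with third-derivative remainder on `[0,1]`. -/
lemma dwr_trapezoid {g g1 g2 g3 : ℝ → ℝ}
    (h1 : ∀ s : ℝ, HasDerivAt g (g1 s) s)
    (h2 : ∀ s : ℝ, HasDerivAt g1 (g2 s) s)
    (h3 : ∀ s : ℝ, HasDerivAt g2 (g3 s) s)
    (hc : Continuous g3) :
    g 1 - g 0 = (1 / 2) * (g1 0 + g1 1)
      + (1 / 2) * ∫ s in (0:ℝ)..1, g3 s * s * (s - 1) := by
  set F : ℝ → ℝ := fun s => g2 s * (s * (s - 1)) - g1 s * (2 * s - 1) + 2 * g s with hF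
  have hF' : ∀ s : ℝ, HasDerivAt F (g3 s * s * (s - 1)) s := by
    intro s
    have hp : HasDerivAt (fun s : ℝ => s * (s - 1)) (2 * s - 1) s := by
      have h := (hasDerivAt_id s).mul ((hasDerivAt_id s).sub_const 1)
      simp only [id] at h
      refine h.congr_deriv ?_
      ring
    have hq : HasDerivAt (fun s : ℝ => 2 * s - 1) 2 s := by
      simpa using ((hasDerivAt_id s).const_mul (2:ℝ)).sub_const 1
    have hA := (h3 s).mul hp
    have hB := (h2 s).mul hq
    have hC := (h1 s).const_mul (2:ℝ)
    have := (hA.sub hB).add hC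
    refine this.congr_deriv ?_
    ring
  have hint : IntervalIntegrable (fun s => g3 s * s * (s - 1)) volume 0 1 :=
    ((hc.mul continuous_id).mul (continuous_id.sub continuous_const)).intervalIntegrable 0 1
  have key : ∫ s in (0:ℝ)..1, g3 s * s * (s - 1) = F 1 - F 0 :=
    intervalIntegral.integral_eq_sub_of_hasDerivAt (fun s _ => hF' s) hint
  have hF1 : F 1 = -(g1 1) + 2 * g 1 := by norm_num [hF]
  have hF0 : F 0 = g1 0 + 2 * g 0 := by norm_num [hF]
  rw [key, hF1, hF0]; ring

/-- Abstract DWR error representation (Theorem 1 of the paper): for a `C³`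
functional `L`, a stationary point `x_c`, and a perturbed Galerkin approximation
`x_d` in a subspace `X_d` (with stabilization defect `S̃`), the error in `L`
is expressed by the residual tested with `x_c - y_d`, the stabilization defect,
and a cubic remainder. -/
theorem dwr_abstract_error_representation {X : Type*} [NormedAddCommGroup X]
    [NormedSpace ℝ X] (L : X → ℝ) (hL : ContDiff ℝ 3 L)
    (Xd : Submodule ℝ X) (xc xd : X) (hxd : xd ∈ Xd)
    (Stil : X →L[ℝ] ℝ)
    (hstat : fderiv ℝ L xc = 0)
    (hgalerkin : ∀ yd ∈ Xd, fderiv ℝ L xd yd = Stil yd)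
    (haux : fderiv ℝ L xc xd = 0) :
    ∀ yd ∈ Xd,
      L xc - L xd
        = (1 / 2) * fderiv ℝ L xd (xc - yd) + (1 / 2) * Stil (yd - xd)
          + (1 / 2) * ∫ s in (0:ℝ)..1,
              (iteratedFDeriv ℝ 3 L (xd + s • (xc - xd)) ![xc - xd, xc - xd, xc - xd])
                * s * (s - 1) := by
  intro yd hyd
  set e : X := xc - xd with he
  set φ : ℝ → X := fun s => xd + s • e with hφdef
  have hφ : ∀ s : ℝ, HasDerivAt φ e s := by
    intro s
    have : HasDerivAt (fun s : ℝ => xd + s • e) ((1:ℝ) • e) s :=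
      (((hasDerivAt_id s).smul_const e)).const_add xd
    simpa only [one_smul] using this
  -- the key differentiation step, uniform in the order k
  have step : ∀ (k : ℕ), (k : WithTop ℕ∞) < 3 → ∀ (m : Fin k → X) (s : ℝ),
      HasDerivAt (fun t => iteratedFDeriv ℝ k L (φ t) m)
        (iteratedFDeriv ℝ (k + 1) L (φ s) (Fin.cons e m)) s := by
    intro k hk m s
    have hdiff : DifferentiableAt ℝ (iteratedFDeriv ℝ k L) (φ s) :=
      (hL.differentiable_iteratedFDeriv hk) (φ s)
    have h1 : HasDerivAt (fun t => iteratedFDeriv ℝ k L (φ t))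
        (fderiv ℝ (iteratedFDeriv ℝ k L) (φ s) e) s :=
      hdiff.hasFDerivAt.comp_hasDerivAt s (hφ s)
    have h2 :=
      ((ContinuousMultilinearMap.apply ℝ (fun _ : Fin k => X) ℝ m).hasFDerivAt).comp_hasDerivAt
        s h1
    have hrw : (iteratedFDeriv ℝ (k + 1) L (φ s)) (Fin.cons e m)
        = fderiv ℝ (iteratedFDeriv ℝ k L) (φ s) e m := by
      rw [iteratedFDeriv_succ_apply_left]
      simp
    rw [hrw]
    exact h2
  -- the four functions in the trapezoidal rule
  set g : ℝ → ℝ := fun s => L (φ s) with hg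
  set g1 : ℝ → ℝ := fun s => fderiv ℝ L (φ s) e with hg1
  set g2 : ℝ → ℝ := fun s => iteratedFDeriv ℝ 2 L (φ s) ![e, e] with hg2
  set g3 : ℝ → ℝ := fun s => iteratedFDeriv ℝ 3 L (φ s) ![e, e, e] with hg3
  have hLd : Differentiable ℝ L := hL.differentiable (by norm_num)
  have h1 : ∀ s : ℝ, HasDerivAt g (g1 s) s := fun s =>
    ((hLd (φ s)).hasFDerivAt).comp_hasDerivAt s (hφ s)
  have h2 : ∀ s : ℝ, HasDerivAt g1 (g2 s) s := by
    intro s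
    have := step 1 (by norm_num) ![e] s
    have heq : (fun t => iteratedFDeriv ℝ 1 L (φ t) ![e]) = g1 := by
      funext t
      simp [hg1, iteratedFDeriv_one_apply]
    rw [heq] at this
    convert this using 1
    rfl
  have h3 : ∀ s : ℝ, HasDerivAt g2 (g3 s) s := by
    intro s
    have := step 2 (by norm_num) ![e, e] s
    convert this using 1
    rfl
  have hc3 : Continuous g3 := by
    have hcont : Continuous (iteratedFDeriv ℝ 3 L) := hL.continuous_iteratedFDeriv le_rfl
    have hφc : Continuous φ := by fun_prop
    exact (ContinuousMultilinearMap.apply ℝ (fun _ : Fin 3 => X) ℝ ![e, e, e]).continuous.comp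
      (hcont.comp hφc)
  have trap := dwr_trapezoid h1 h2 h3 hc3
  have hφ0 : φ 0 = xd := by simp [hφdef]
  have hφ1 : φ 1 = xc := by simp [hφdef, he]
  have hg10 : g1 0 = fderiv ℝ L xd e := by rw [hg1]; simp [hφ0]
  have hg11 : g1 1 = 0 := by rw [hg1]; simp [hφ1, hstat]
  have hsplit : fderiv ℝ L xd e = fderiv ℝ L xd (xc - yd) + Stil (yd - xd) := by
    have hmem : yd - xd ∈ Xd := Xd.sub_mem hyd hxd
    rw [← hgalerkin _ hmem, ← (fderiv ℝ L xd).map_add]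
    congr 1
    rw [he]
    abel
  rw [hg10, hg11, hsplit] at trap
  have hgoal : L xc - L xd = g 1 - g 0 := by
    rw [hg]
    simp [hφ0, hφ1]
  rw [hgoal, trap]
  have hint : (∫ s in (0:ℝ)..1, g3 s * s * (s - 1))
      = ∫ s in (0:ℝ)..1,
          (iteratedFDeriv ℝ 3 L (xd + s • e)) ![e, e, e] * s * (s - 1) := rfl
  rw [hint]
  ring
end

section
/- Let X be a real normed vector space, L : X → ℝ a C³ functional, x_c a stationary point of L (L'(x_c) = 0), and x_d ∈ X arbitrary with e = x_c − x_d. Then L(x_c) − L(x_d) = (1/2)·L'(x_d)(e) + (1/2)·∫₀¹ L'''(x_d + s·e)(e,e,e)·s·(s−1) ds; in particular, if L''' vanishes identically (L is a quadratic functional), then L(x_c) − L(x_d) = (1/2)·L'(x_d)(x_c − x_d) exactly. -/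
open MeasureTheory

/-- Error identity at a stationary point of a `C³` functional, with cubic
remainder; if the third derivative vanishes identically (quadratic functional),
the identity is exact without remainder. -/
theorem dwr_stationary_point_error {X : Type*} [NormedAddCommGroup X]
    [NormedSpace ℝ X] (L : X → ℝ) (hL : ContDiff ℝ 3 L)
    (xc xd : X) (hstat : fderiv ℝ L xc = 0) :
    (L xc - L xd
        = (1 / 2) * fderiv ℝ L xd (xc - xd)
          + (1 / 2) * ∫ s in (0:ℝ)..1,
              (iteratedFDeriv ℝ 3 L (xd + s • (xc - xd)) ![xc - xd, xc - xd, xc - xd])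
                * s * (s - 1))
      ∧ ((∀ x : X, iteratedFDeriv ℝ 3 L x = 0) →
          L xc - L xd = (1 / 2) * fderiv ℝ L xd (xc - xd)) := by
  have h2 : ContDiff ℝ 2 (fderiv ℝ L) := hL.fderiv_right (by norm_num)
  have h1 : ContDiff ℝ 1 (fderiv ℝ (fderiv ℝ L)) := h2.fderiv_right (by norm_num)
  have h0 : Continuous (fderiv ℝ (fderiv ℝ (fderiv ℝ L))) :=
    (h1.fderiv_right (m := 0) (by norm_num)).continuous
  set e := xc - xd with he
  set γ : ℝ → X := fun s => xd + s • e with hγ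
  have h3 : ∀ x : X, iteratedFDeriv ℝ 3 L x ![e,e,e]
      = fderiv ℝ (fderiv ℝ (fderiv ℝ L)) x e e e := by
    intro x
    rw [iteratedFDeriv_succ_apply_right (n := 2), iteratedFDeriv_two_apply]
    simp [Fin.init, Fin.last]
  -- derivative of γ
  have hγd : ∀ s : ℝ, HasDerivAt γ e s := by
    intro s
    have h := ((hasDerivAt_id s).smul_const e).const_add xd
    simp only [one_smul] at h
    exact h
  have hγ0 : γ 0 = xd := by simp [hγ]
  have hγ1 : γ 1 = xc := by simp [hγ, he]
  -- derivatives along the line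
  have hg0 : ∀ s : ℝ, HasDerivAt (fun t => L (γ t)) (fderiv ℝ L (γ s) e) s := by
    intro s
    exact ((hL.differentiable (by norm_num)).differentiableAt.hasFDerivAt).comp_hasDerivAt s
      (hγd s)
  have hg1 : ∀ s : ℝ, HasDerivAt (fun t => fderiv ℝ L (γ t) e)
      (fderiv ℝ (fderiv ℝ L) (γ s) e e) s := by
    intro s
    have hc : HasDerivAt (fun t => fderiv ℝ L (γ t)) (fderiv ℝ (fderiv ℝ L) (γ s) e) s :=
      ((h2.differentiable (by norm_num)).differentiableAt.hasFDerivAt).comp_hasDerivAt s (hγd s)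
    simpa using hc.clm_apply (hasDerivAt_const s e)
  have hg2 : ∀ s : ℝ, HasDerivAt (fun t => fderiv ℝ (fderiv ℝ L) (γ t) e e)
      (fderiv ℝ (fderiv ℝ (fderiv ℝ L)) (γ s) e e e) s := by
    intro s
    have hc : HasDerivAt (fun t => fderiv ℝ (fderiv ℝ L) (γ t))
        (fderiv ℝ (fderiv ℝ (fderiv ℝ L)) (γ s) e) s :=
      ((h1.differentiable (by norm_num)).differentiableAt.hasFDerivAt).comp_hasDerivAt s (hγd s)
    simpa using (hc.clm_apply (hasDerivAt_const s e)).clm_apply (hasDerivAt_const s e)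
  -- antiderivative F
  set F : ℝ → ℝ := fun s => fderiv ℝ (fderiv ℝ L) (γ s) e e * (s * (s - 1))
      - fderiv ℝ L (γ s) e * (2 * s - 1) + 2 * L (γ s) with hF
  have hFd : ∀ s : ℝ, HasDerivAt F
      (fderiv ℝ (fderiv ℝ (fderiv ℝ L)) (γ s) e e e * (s * (s - 1))) s := by
    intro s
    have hs : HasDerivAt (fun t : ℝ => t * (t - 1)) (2 * s - 1) s := by
      have h := ((hasDerivAt_id s).mul ((hasDerivAt_id s).sub_const 1))
      simp only [id] at h
      refine h.congr_deriv ?_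
      ring
    have hs2 : HasDerivAt (fun t : ℝ => 2 * t - 1) 2 s := by
      simpa using ((hasDerivAt_id s).const_mul 2).sub_const 1
    have h := (((hg2 s).mul hs).sub ((hg1 s).mul hs2)).add ((hg0 s).const_mul 2)
    refine h.congr_deriv ?_
    ring
  have hFd' : ∀ s : ℝ, HasDerivAt F
      ((iteratedFDeriv ℝ 3 L (γ s) ![e, e, e]) * s * (s - 1)) s := by
    intro s
    have h := hFd s
    rw [← h3 (γ s), ← mul_assoc] at h
    exact h
  -- continuity of the third directional derivative
  have hγc : Continuous γ := by
    apply Continuous.add continuous_const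
    exact continuous_id.smul continuous_const
  have hcont : Continuous fun s : ℝ => iteratedFDeriv ℝ 3 L (γ s) ![e, e, e] := by
    have hc : Continuous (iteratedFDeriv ℝ 3 L) := hL.continuous_iteratedFDeriv le_rfl
    exact ContinuousEval.continuous_eval.comp ((hc.comp hγc).prodMk continuous_const)
  -- the integral identity
  have hint : (∫ s in (0:ℝ)..1,
        (iteratedFDeriv ℝ 3 L (γ s) ![e, e, e]) * s * (s - 1))
      = F 1 - F 0 := by
    apply intervalIntegral.integral_eq_sub_of_hasDerivAt (fun s _ => hFd' s)
    apply Continuous.intervalIntegrable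
    exact (hcont.mul continuous_id).mul (continuous_id.sub continuous_const)
  have hF1 : F 1 - F 0 = 2 * (L (γ 1) - L (γ 0)) - fderiv ℝ L (γ 1) e
      - fderiv ℝ L (γ 0) e := by
    simp only [hF]
    ring
  have hstat' : fderiv ℝ L (γ 1) e = 0 := by rw [hγ1, hstat]; rfl
  have key : L xc - L xd
      = (1 / 2) * fderiv ℝ L xd e
        + (1 / 2) * ∫ s in (0:ℝ)..1,
            (iteratedFDeriv ℝ 3 L (γ s) ![e, e, e]) * s * (s - 1) := by
    rw [hint, hF1, hstat', hγ0, hγ1]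
    ring
  constructor
  · exact key
  · intro hzero
    have : (∫ s in (0:ℝ)..1, (iteratedFDeriv ℝ 3 L (γ s) ![e, e, e]) * s * (s - 1)) = 0 := by
      have : ∀ s : ℝ, (iteratedFDeriv ℝ 3 L (γ s) ![e, e, e]) * s * (s - 1) = 0 := by
        intro s; rw [hzero]; simp
      simp [this]
    rw [key, this]
    ring
end
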